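/- arXiv:1910.05713 — 4 statements merged into one kernel-verified Lean document; each statement's English description precedes it below -/
import Mathlib

section
/- The cumulative distribution function of the main channel gain H_B satisfies, for every h with v_min ≤ h ≤ v_max, Pr(H_B ≤ h) = ((m+3)Ξ₁/2) · (v_min^{−2/(m+3)} − h^{−2/(m+3)}). -/
open MeasureTheory ProbabilityTheory Metric Set Module

/-!
The gain `c (‖U‖² + l²)^{-(m+3)/2}` is a decreasing function of `‖U‖`, so for
`v_min ≤ h ≤ v_max` the event `H_B ≤ h` is the annulus `R ≤ ‖U‖ ≤ D` with
`R² = (c/h)^{2/(m+3)} - l² ∈ [0, D²]`. Under the uniform law its probability is the area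
ratio `(D² - R²)/D²`, which is the claimed expression after expanding `Ξ₁` and `v_min`.
-/

theorem mul_rpow_neg_le_iff {a c h x : ℝ} (ha : 0 < a) (hc : 0 < c) (hh : 0 < h) (hx : 0 < x) :
    c * x ^ (-a) ≤ h ↔ (c / h) ^ a⁻¹ ≤ x := by
  rw [Real.rpow_neg hx.le, ← div_eq_mul_inv, div_le_iff₀ (by positivity), ← div_le_iff₀' hh,
    Real.rpow_inv_le_iff_of_pos (by positivity) hx.le ha]

theorem le_mul_rpow_neg_iff {a c h x : ℝ} (ha : 0 < a) (hc : 0 < c) (hh : 0 < h) (hx : 0 < x) :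
    h ≤ c * x ^ (-a) ↔ x ≤ (c / h) ^ a⁻¹ := by
  rw [Real.rpow_neg hx.le, ← div_eq_mul_inv, le_div_iff₀ (by positivity), ← le_div_iff₀' hh,
    Real.le_rpow_inv_iff_of_pos hx.le (by positivity) ha]

theorem area_ratio_eq_cdf_formula {D l n c h : ℝ} (hD : 0 < D) (hn : 0 < n) (hc : 0 < c)
    (hh : 0 < h) :
    (D ^ 2 - ((c / h) ^ (n / 2)⁻¹ - l ^ 2)) / D ^ 2 =
      n * (2 / (n * D ^ 2) * c ^ (2 / n)) / 2 *
        ((c * (D ^ 2 + l ^ 2) ^ (-(n / 2))) ^ (-2 / n) - h ^ (-2 / n)) := by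
  have hvmin_rpow :
      (c * (D ^ 2 + l ^ 2) ^ (-(n / 2))) ^ (-2 / n) = (D ^ 2 + l ^ 2) / c ^ (2 / n) := by
    rw [Real.mul_rpow hc.le (by positivity), ← Real.rpow_mul (by positivity),
      show -(n / 2) * (-2 / n) = 1 by field_simp, Real.rpow_one, neg_div,
      Real.rpow_neg hc.le, inv_mul_eq_div]
  have hh_rpow : h ^ (-2 / n) = (c / h) ^ (n / 2)⁻¹ / c ^ (2 / n) := by
    rw [inv_div, Real.div_rpow hc.le hh.le, neg_div, Real.rpow_neg hh.le]
    field_simp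
  rw [hvmin_rpow, hh_rpow]
  field_simp
  ring

section UniformBall

variable {E : Type*} [NormedAddCommGroup E] [NormedSpace ℝ E] [MeasurableSpace E] [BorelSpace E]
  [FiniteDimensional ℝ E] [Nontrivial E] (μ : Measure E) [μ.IsAddHaarMeasure]

theorem addHaar_closedBall_diff_ball {D R : ℝ} (hR : 0 ≤ R) (hRD : R ≤ D) :
    μ (closedBall 0 D \ ball 0 R) =
      ENNReal.ofReal (D ^ finrank ℝ E - R ^ finrank ℝ E) * μ (ball 0 1) := by
  rw [measure_sdiff (ball_subset_closedBall.trans (closedBall_subset_closedBall hRD))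
      measurableSet_ball.nullMeasurableSet measure_ball_lt_top.ne,
    Measure.addHaar_closedBall μ 0 (hR.trans hRD), Measure.addHaar_ball μ 0 hR,
    ← ENNReal.sub_mul fun _ _ => measure_ball_lt_top.ne, ← ENNReal.ofReal_sub _ (by positivity)]

theorem measure_le_norm_of_map_eq_uniform_closedBall {Ω : Type*} [MeasurableSpace Ω]
    {P : Measure Ω} {U : Ω → E} (hU : Measurable U) {D R : ℝ} (hD : 0 < D) (hR : 0 ≤ R)
    (hRD : R ≤ D) (hlaw : P.map U = (μ (closedBall 0 D))⁻¹ • μ.restrict (closedBall 0 D)) :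
    P {ω | R ≤ ‖U ω‖} =
      ENNReal.ofReal ((D ^ finrank ℝ E - R ^ finrank ℝ E) / D ^ finrank ℝ E) := by
  have hA : MeasurableSet {x : E | R ≤ ‖x‖} :=
    measurableSet_le measurable_const measurable_norm
  have hannulus : {x : E | R ≤ ‖x‖} ∩ closedBall 0 D = closedBall 0 D \ ball 0 R := by
    ext x
    simp only [mem_inter_iff, mem_ofPred_eq, mem_sdiff, mem_closedBall, mem_ball, dist_zero_right,
      not_lt, and_comm]
  rw [show {ω | R ≤ ‖U ω‖} = U ⁻¹' {x | R ≤ ‖x‖} from rfl, ← Measure.map_apply hU hA, hlaw,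
    Measure.smul_apply, Measure.restrict_apply hA, hannulus, addHaar_closedBall_diff_ball μ hR hRD,
    Measure.addHaar_closedBall μ 0 hD.le, smul_eq_mul, ← ENNReal.div_eq_inv_mul,
    ENNReal.mul_div_mul_right _ _ (measure_ball_pos μ 0 one_pos).ne' measure_ball_lt_top.ne,
    ← ENNReal.ofReal_div_of_pos (by positivity)]

end UniformBall

theorem cdf_main_channel_gain_general
    (D l m c : ℝ) (hD : 0 < D) (hl : 0 < l) (hm : 0 < m) (hc : 0 < c)
    (vmin vmax Ξ₁ : ℝ)
    (hvmin : vmin = c * (D ^ 2 + l ^ 2) ^ (-(m + 3) / 2))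
    (hvmax : vmax = c * l ^ (-(m + 3)))
    (hΞ₁ : Ξ₁ = 2 / ((m + 3) * D ^ 2) * c ^ (2 / (m + 3)))
    {Ω : Type*} [MeasureSpace Ω]
    (U : Ω → EuclideanSpace ℝ (Fin 2)) (hU : Measurable U)
    (hlaw : Measure.map U (ℙ : Measure Ω) =
      (volume (Metric.closedBall (0 : EuclideanSpace ℝ (Fin 2)) D))⁻¹ •
        volume.restrict (Metric.closedBall (0 : EuclideanSpace ℝ (Fin 2)) D))
    (h : ℝ) (h1 : vmin ≤ h) (h2 : h ≤ vmax) :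
    (ℙ : Measure Ω) {ω | c * (‖U ω‖ ^ 2 + l ^ 2) ^ (-(m + 3) / 2) ≤ h} =
      ENNReal.ofReal
        ((m + 3) * Ξ₁ / 2 * (vmin ^ (-2 / (m + 3)) - h ^ (-2 / (m + 3)))) := by
  have hm3 : 0 < m + 3 := by positivity
  have ha : 0 < (m + 3) / 2 := by positivity
  have hh : 0 < h := (hvmin ▸ by positivity : 0 < vmin).trans_le h1
  rw [neg_div] at hvmin ⊢
  set K := (c / h) ^ ((m + 3) / 2)⁻¹
  have hKD : K ≤ D ^ 2 + l ^ 2 := (mul_rpow_neg_le_iff ha hc hh (by positivity)).1 (hvmin ▸ h1)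
  have hlK : l ^ 2 ≤ K := by
    refine (le_mul_rpow_neg_iff ha hc hh (by positivity)).1 ?_
    rwa [← Real.rpow_natCast, ← Real.rpow_mul hl.le,
      show ((2 : ℕ) : ℝ) * -((m + 3) / 2) = -(m + 3) by push_cast; ring, ← hvmax]
  set R := √(K - l ^ 2)
  have hRsq : R ^ 2 = K - l ^ 2 := Real.sq_sqrt (by linarith)
  have hRD : R ≤ D := (Real.sqrt_le_left hD.le).2 (by linarith)
  have hevent :
      {ω | c * (‖U ω‖ ^ 2 + l ^ 2) ^ (-((m + 3) / 2)) ≤ h} = {ω | R ≤ ‖U ω‖} := by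
    ext ω
    rw [mem_ofPred_eq, mem_ofPred_eq, mul_rpow_neg_le_iff ha hc hh (by positivity),
      Real.sqrt_le_left (norm_nonneg _), sub_le_iff_le_add]
  rw [hevent, measure_le_norm_of_map_eq_uniform_closedBall volume hU hD (Real.sqrt_nonneg _) hRD
    hlaw, finrank_euclideanSpace_fin, hRsq]
  congr 1
  rw [hΞ₁, hvmin]
  exact area_ratio_eq_cdf_formula hD hm3 hc hh

/-- The CDF of the main channel gain `H_B = c(‖U‖² + l²)^{-(m+3)/2}` satisfies
`Pr(H_B ≤ h) = ((m+3)Ξ₁/2)·(v_min^{-2/(m+3)} − h^{-2/(m+3)})` for `v_min ≤ h ≤ v_max`. -/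
theorem cdf_main_channel_gain
    (D l m c : ℝ) (hD : 0 < D) (hl : 0 < l) (hm : 0 < m) (hc : 0 < c)
    (vmin vmax Ξ₁ : ℝ)
    (hvmin : vmin = c * (D ^ 2 + l ^ 2) ^ (-(m + 3) / 2))
    (hvmax : vmax = c * l ^ (-(m + 3)))
    (hΞ₁ : Ξ₁ = 2 / ((m + 3) * D ^ 2) * c ^ (2 / (m + 3)))
    {Ω : Type*} [MeasureSpace Ω] [IsProbabilityMeasure (ℙ : Measure Ω)]
    (U : Ω → EuclideanSpace ℝ (Fin 2)) (hU : Measurable U)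
    (hlaw : Measure.map U (ℙ : Measure Ω) =
      (volume (Metric.closedBall (0 : EuclideanSpace ℝ (Fin 2)) D))⁻¹ •
        volume.restrict (Metric.closedBall (0 : EuclideanSpace ℝ (Fin 2)) D))
    (h : ℝ) (h1 : vmin ≤ h) (h2 : h ≤ vmax) :
    (ℙ : Measure Ω) {ω | c * (‖U ω‖ ^ 2 + l ^ 2) ^ (-(m + 3) / 2) ≤ h} =
      ENNReal.ofReal
        ((m + 3) * Ξ₁ / 2 * (vmin ^ (-2 / (m + 3)) - h ^ (-2 / (m + 3)))) :=
  cdf_main_channel_gain_general D l m c hD hl hm hc vmin vmax Ξ₁ hvmin hvmax hΞ₁ U hU hlaw h h1 h2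
end

section
/- The cumulative distribution function of the eavesdropping channel gain H_E satisfies, for every h with v_min ≤ h ≤ v_mid, Pr(H_E ≤ h) = ((m+3)Ξ₂/2) · (v_min^{−2/(m+3)} − h^{−2/(m+3)}). -/
open MeasureTheory ProbabilityTheory Metric Set

/-!
Since `a ↦ c a^e` is decreasing for `e = -(m+3)/2 < 0`, the event `H_E ≤ h` is the event
`‖W‖² + l² ≥ t` with `t = (h/c)^{1/e}`, i.e. `W` lies outside the disc of radius `r = √(t - l²)`,
and `ρ ≤ r ≤ D` exactly when `v_min ≤ h ≤ v_mid`. Under the uniform law on the annulus this has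
probability `(D² - r²)/(D² - ρ²)`, which is the claimed expression after
`v_min^{1/e} = c^{1/e}(D² + l²)` and `h^{1/e} = c^{1/e} t`.
-/

namespace Real

variable {a c e h : ℝ}

lemma mul_rpow_le_iff_of_neg (hc : 0 < c) (hh : 0 < h) (ha : 0 < a) (he : e < 0) :
    c * a ^ e ≤ h ↔ (h / c) ^ e⁻¹ ≤ a := by
  rw [← le_div_iff₀' hc, rpow_inv_le_iff_of_neg (div_pos hh hc) ha he]

lemma le_mul_rpow_iff_of_neg (hc : 0 < c) (hh : 0 < h) (ha : 0 < a) (he : e < 0) :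
    h ≤ c * a ^ e ↔ a ≤ (h / c) ^ e⁻¹ := by
  rw [← div_le_iff₀' hc, le_rpow_inv_iff_of_neg ha (div_pos hh hc) he]

lemma mul_rpow_rpow_inv (hc : 0 ≤ c) (ha : 0 ≤ a) (he : e ≠ 0) :
    (c * a ^ e) ^ e⁻¹ = c ^ e⁻¹ * a := by
  rw [mul_rpow hc (rpow_nonneg ha e), rpow_rpow_inv ha he]

lemma le_sq_add_iff_sqrt_sub_le {x s t : ℝ} (hx : 0 ≤ x) : t ≤ x ^ 2 + s ↔ √(t - s) ≤ x := by
  rw [sqrt_le_left hx, sub_le_iff_le_add]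

end Real

namespace EuclideanSpace

local notation "ℝ²" => EuclideanSpace ℝ (Fin 2)

lemma volume_closedBall_sdiff_ball_fin_two (x : ℝ²) {r R : ℝ} (hr : 0 ≤ r) (hrR : r ≤ R) :
    volume (closedBall x R \ ball x r) = ENNReal.ofReal (Real.pi * (R ^ 2 - r ^ 2)) := by
  rw [measure_sdiff (ball_subset_closedBall.trans (closedBall_subset_closedBall hrR))
      measurableSet_ball.nullMeasurableSet measure_ball_lt_top.ne,
    volume_closedBall_fin_two, volume_ball_fin_two, ← ENNReal.ofReal_pow (hr.trans hrR),
    ← ENNReal.ofReal_pow hr, ← ENNReal.ofReal_mul (by positivity),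
    ← ENNReal.ofReal_mul (by positivity), ← ENNReal.ofReal_sub _ (by positivity)]
  ring_nf

lemma uniform_annulus_compl_ball (x : ℝ²) {ρ r D : ℝ} (hρ : 0 ≤ ρ) (hρr : ρ ≤ r) (hrD : r ≤ D)
    (hρD : ρ < D) :
    ((volume (closedBall x D \ ball x ρ))⁻¹ • volume.restrict (closedBall x D \ ball x ρ))
        (ball x r)ᶜ = ENNReal.ofReal ((D ^ 2 - r ^ 2) / (D ^ 2 - ρ ^ 2)) := by
  have hcap : (ball x r)ᶜ ∩ (closedBall x D \ ball x ρ) = closedBall x D \ ball x r := by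
    ext w
    simp only [mem_inter_iff, mem_compl_iff, mem_sdiff, mem_ball, mem_closedBall, not_lt]
    exact ⟨fun ⟨hr, hD, _⟩ ↦ ⟨hD, hr⟩, fun ⟨hD, hr⟩ ↦ ⟨hr, hD, hρr.trans hr⟩⟩
  have hDρ : 0 < Real.pi * (D ^ 2 - ρ ^ 2) := by
    have := pow_lt_pow_left₀ hρD hρ two_ne_zero
    have := Real.pi_pos
    positivity
  rw [Measure.smul_apply, Measure.restrict_apply measurableSet_ball.compl, hcap,
    volume_closedBall_sdiff_ball_fin_two x hρ hρD.le,
    volume_closedBall_sdiff_ball_fin_two x (hρ.trans hρr) hrD, smul_eq_mul,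
    ← ENNReal.ofReal_inv_of_pos hDρ, ← ENNReal.ofReal_mul (inv_nonneg.mpr hDρ.le)]
  congr 1
  field_simp [Real.pi_ne_zero]

end EuclideanSpace

theorem cdf_eavesdropping_channel_gain_general
    (D ρ l m c : ℝ) (hD : 0 < D) (hρ0 : 0 ≤ ρ) (hρD : ρ < D) (hl : 0 < l) (hm : 0 < m)
    (hc : 0 < c)
    (vmin vmid Ξ₂ : ℝ)
    (hvmin : vmin = c * (D ^ 2 + l ^ 2) ^ (-(m + 3) / 2))
    (hvmid : vmid = c * (ρ ^ 2 + l ^ 2) ^ (-(m + 3) / 2))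
    (hΞ₂ : Ξ₂ = 2 / ((m + 3) * (D ^ 2 - ρ ^ 2)) * c ^ (2 / (m + 3)))
    {Ω : Type*} [MeasureSpace Ω]
    (W : Ω → EuclideanSpace ℝ (Fin 2)) (hW : Measurable W)
    (hlaw : Measure.map W (ℙ : Measure Ω) =
      (volume (Metric.closedBall (0 : EuclideanSpace ℝ (Fin 2)) D \
          Metric.ball (0 : EuclideanSpace ℝ (Fin 2)) ρ))⁻¹ •
        volume.restrict (Metric.closedBall (0 : EuclideanSpace ℝ (Fin 2)) D \
          Metric.ball (0 : EuclideanSpace ℝ (Fin 2)) ρ))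
    (h : ℝ) (h1 : vmin ≤ h) (h2 : h ≤ vmid) :
    (ℙ : Measure Ω) {ω | c * (‖W ω‖ ^ 2 + l ^ 2) ^ (-(m + 3) / 2) ≤ h} =
      ENNReal.ofReal
        ((m + 3) * Ξ₂ / 2 * (vmin ^ (-2 / (m + 3)) - h ^ (-2 / (m + 3)))) := by
  set e : ℝ := -(m + 3) / 2
  have he : e < 0 := by simp only [e]; linarith
  have hh : 0 < h := lt_of_lt_of_le (by rw [hvmin]; positivity) h1
  set t := (h / c) ^ e⁻¹
  have htD : t ≤ D ^ 2 + l ^ 2 :=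
    (Real.mul_rpow_le_iff_of_neg hc hh (by positivity) he).mp (hvmin ▸ h1)
  have hρt : ρ ^ 2 + l ^ 2 ≤ t :=
    (Real.le_mul_rpow_iff_of_neg hc hh (by positivity) he).mp (hvmid ▸ h2)
  have hs : 0 ≤ t - l ^ 2 := by linarith [sq_nonneg ρ]
  have hρr : ρ ≤ √(t - l ^ 2) := (Real.le_sqrt hρ0 hs).mpr (by linarith)
  have hrD : √(t - l ^ 2) ≤ D := (Real.sqrt_le_left hD.le).mpr (by linarith)
  have hevent : {ω | c * (‖W ω‖ ^ 2 + l ^ 2) ^ e ≤ h} = W ⁻¹' (ball 0 √(t - l ^ 2))ᶜ := by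
    ext ω
    rw [mem_ofPred_eq, Real.mul_rpow_le_iff_of_neg hc hh (by positivity) he,
      Real.le_sq_add_iff_sqrt_sub_le (norm_nonneg _)]
    simp only [mem_preimage, mem_compl_iff, mem_ball, dist_zero_right, not_lt, t]
  have hvmin_pow : vmin ^ e⁻¹ = c ^ e⁻¹ * (D ^ 2 + l ^ 2) := by
    rw [hvmin, Real.mul_rpow_rpow_inv hc.le (by positivity) he.ne]
  have hh_pow : h ^ e⁻¹ = c ^ e⁻¹ * t := by
    rw [← Real.mul_rpow hc.le (by positivity), mul_div_cancel₀ _ hc.ne']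
  have he_inv : -2 / (m + 3) = e⁻¹ := by simp only [e]; rw [inv_div, div_neg, neg_div]
  rw [hevent, ← Measure.map_apply hW measurableSet_ball.compl, hlaw,
    EuclideanSpace.uniform_annulus_compl_ball 0 hρ0 hρr hrD hρD, he_inv, hvmin_pow, hh_pow,
    hΞ₂, Real.sq_sqrt hs, show 2 / (m + 3) = -e⁻¹ by rw [← he_inv]; ring,
    Real.rpow_neg hc.le]
  have hDρ : D ^ 2 - ρ ^ 2 ≠ 0 := by nlinarith
  have hm3 : m + 3 ≠ 0 := by linarith
  congr 1
  field_simp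
  ring

/-- The CDF of the eavesdropping channel gain `H_E = c(‖W‖² + l²)^{-(m+3)/2}` satisfies
`Pr(H_E ≤ h) = ((m+3)Ξ₂/2)·(v_min^{-2/(m+3)} − h^{-2/(m+3)})` for `v_min ≤ h ≤ v_mid`. -/
theorem cdf_eavesdropping_channel_gain
    (D ρ l m c : ℝ) (hD : 0 < D) (hρ0 : 0 ≤ ρ) (hρD : ρ < D) (hl : 0 < l) (hm : 0 < m)
    (hc : 0 < c)
    (vmin vmid Ξ₂ : ℝ)
    (hvmin : vmin = c * (D ^ 2 + l ^ 2) ^ (-(m + 3) / 2))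
    (hvmid : vmid = c * (ρ ^ 2 + l ^ 2) ^ (-(m + 3) / 2))
    (hΞ₂ : Ξ₂ = 2 / ((m + 3) * (D ^ 2 - ρ ^ 2)) * c ^ (2 / (m + 3)))
    {Ω : Type*} [MeasureSpace Ω] [IsProbabilityMeasure (ℙ : Measure Ω)]
    (W : Ω → EuclideanSpace ℝ (Fin 2)) (hW : Measurable W)
    (hlaw : Measure.map W (ℙ : Measure Ω) =
      (volume (Metric.closedBall (0 : EuclideanSpace ℝ (Fin 2)) D \
          Metric.ball (0 : EuclideanSpace ℝ (Fin 2)) ρ))⁻¹ •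
        volume.restrict (Metric.closedBall (0 : EuclideanSpace ℝ (Fin 2)) D \
          Metric.ball (0 : EuclideanSpace ℝ (Fin 2)) ρ))
    (h : ℝ) (h1 : vmin ≤ h) (h2 : h ≤ vmid) :
    (ℙ : Measure Ω) {ω | c * (‖W ω‖ ^ 2 + l ^ 2) ^ (-(m + 3) / 2) ≤ h} =
      ENNReal.ofReal
        ((m + 3) * Ξ₂ / 2 * (vmin ^ (-2 / (m + 3)) - h ^ (-2 / (m + 3)))) :=
  cdf_eavesdropping_channel_gain_general D ρ l m c hD hρ0 hρD hl hm hc vmin vmid Ξ₂ hvmin hvmid hΞ₂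
    W hW hlaw h h1 h2
end

section
/- (Theorem 3, case 3.) If χ² < γ_th ≤ χ²·v_max²/v_mid², then Pr(J_B ≤ γ_th·J_E) = S₂, where S₂ = ψ(m+3)²·J_{B,min}^{−1/(m+3)}·(J_{E,min}^{−1/(m+3)} − J_{E,max}^{−1/(m+3)}) − (ψ/2)(m+3)²·γ_th^{−1/(m+3)}·(J_{E,min}^{−2/(m+3)} − J_{E,max}^{−2/(m+3)}). -/
/-!
Put `μ = m + 3` and `τ = (a / (γ_th b))^(1/μ)`. Since `J_B` is proportional to `(|U|² + l²)^(-μ)`,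
the event `J_B ≤ γ_th J_E` is `τ (|W|² + l²) ≤ |U|² + l²`. In the plane, `|U|²` is uniform on
`[0, D²]` and `|W|²` is uniform on `[ρ², D²]`, and they are independent. The two case conditions
say exactly that the threshold `τ (y + l²) - l²` stays in `[0, D²]` for `y ∈ [ρ², D²]`, so given
`|W|² = y` the event has probability `(D² + l² - τ (y + l²)) / D²`. This is affine in `y`, so its
mean over `[ρ², D²]` is its value at the midpoint, and that is the closed form `S₂`.
-/

open MeasureTheory ProbabilityTheory Metric Set

open Real

local notation "ℝ²" => EuclideanSpace ℝ (Fin 2)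

theorem MeasureTheory.Measure.ext_of_Iic' {α : Type*} [TopologicalSpace α] {m : MeasurableSpace α}
    [SecondCountableTopology α] [LinearOrder α] [OrderTopology α] [BorelSpace α] [NoMinOrder α]
    (μ ν : Measure α) (hμ : ∀ a, μ (Iic a) ≠ ⊤) (h : ∀ a, μ (Iic a) = ν (Iic a)) : μ = ν := by
  refine Measure.ext_of_Ioc' μ ν (fun a b _ => ne_top_of_le_ne_top (hμ b)
    (measure_mono Ioc_subset_Iic_self)) fun a b hab => ?_
  have hsub : Iic a ⊆ Iic b := Iic_subset_Iic.2 hab.le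
  rw [← Iic_sdiff_Iic, measure_sdiff hsub measurableSet_Iic.nullMeasurableSet (hμ a),
    measure_sdiff hsub measurableSet_Iic.nullMeasurableSet (h a ▸ hμ a), h, h]

lemma volume_setOf_norm_sq_le (x : ℝ) :
    volume {y : ℝ² | ‖y‖ ^ 2 ≤ x} = ENNReal.ofReal (π * x) := by
  rcases lt_or_ge x 0 with hx | hx
  · have hempty : {y : ℝ² | ‖y‖ ^ 2 ≤ x} = ∅ :=
      eq_empty_of_forall_notMem fun y hy => hy.not_gt (hx.trans_le (by positivity))
    rw [hempty, measure_empty, ENNReal.ofReal_of_nonpos (by nlinarith [pi_pos])]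
  · have hball : {y : ℝ² | ‖y‖ ^ 2 ≤ x} = closedBall 0 √x := by
      ext y
      simp [Real.le_sqrt (norm_nonneg y) hx]
    rw [hball, EuclideanSpace.volume_closedBall_fin_two, ← ENNReal.ofReal_pow (sqrt_nonneg _),
      sq_sqrt hx, ← ENNReal.ofReal_mul hx, mul_comm]

lemma map_norm_sq_volume :
    volume.map (fun y : ℝ² => ‖y‖ ^ 2) = ENNReal.ofReal π • volume.restrict (Ici 0) := by
  have hmap : ∀ x, volume.map (fun y : ℝ² => ‖y‖ ^ 2) (Iic x) = ENNReal.ofReal (π * x) :=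
    fun x => by
      rw [Measure.map_apply (by fun_prop) measurableSet_Iic]
      exact volume_setOf_norm_sq_le x
  refine Measure.ext_of_Iic' _ _ (fun x => hmap x ▸ ENNReal.ofReal_ne_top) fun x => ?_
  rw [hmap, Measure.smul_apply, Measure.restrict_apply measurableSet_Iic, Iic_inter_Ici,
    Real.volume_Icc, sub_zero, smul_eq_mul, ← ENNReal.ofReal_mul pi_pos.le]

lemma map_cond_preimage {α β : Type*} [MeasurableSpace α] [MeasurableSpace β] {f : α → β}
    (hf : Measurable f) {t : Set β} (ht : MeasurableSet t) (μ : Measure α) :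
    (μ[|f ⁻¹' t]).map f = (μ.map f)[|t] := by
  simp only [ProbabilityTheory.cond, Measure.map_smul, Measure.map_apply hf ht,
    Measure.restrict_map hf ht]

lemma cond_smul {α : Type*} [MeasurableSpace α] {c : ENNReal} (hc₀ : c ≠ 0) (hc : c ≠ ⊤)
    (μ : Measure α) (s : Set α) : (c • μ)[|s] = μ[|s] := by
  simp only [ProbabilityTheory.cond, Measure.smul_apply, Measure.restrict_smul, smul_smul,
    smul_eq_mul, ENNReal.mul_inv (.inl hc₀) (.inl hc)]
  rw [mul_right_comm, ENNReal.inv_mul_cancel hc₀ hc, one_mul]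

lemma cond_restrict_of_subset {α : Type*} [MeasurableSpace α] {μ : Measure α} {s u : Set α}
    (hs : MeasurableSet s) (hsu : s ⊆ u) : (μ.restrict u)[|s] = μ[|s] := by
  simp only [ProbabilityTheory.cond, Measure.restrict_apply hs, Measure.restrict_restrict hs,
    inter_eq_left.2 hsu]

lemma map_norm_sq_cond_annulus {ρ D : ℝ} (hρ : 0 ≤ ρ) (hD : 0 ≤ D) :
    (volume[|closedBall (0 : ℝ²) D \ ball 0 ρ]).map (fun y => ‖y‖ ^ 2) =
      volume[|Icc (ρ ^ 2) (D ^ 2)] := by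
  have hpre : (fun y : ℝ² => ‖y‖ ^ 2) ⁻¹' Icc (ρ ^ 2) (D ^ 2) = closedBall 0 D \ ball 0 ρ := by
    ext y
    simp [sq_le_sq₀ hρ (norm_nonneg y), sq_le_sq₀ (norm_nonneg y) hD, and_comm]
  rw [← hpre, map_cond_preimage (by fun_prop) measurableSet_Icc, map_norm_sq_volume,
    cond_smul (by simp [pi_pos]) ENNReal.ofReal_ne_top,
    cond_restrict_of_subset measurableSet_Icc
      (Icc_subset_Ici_self.trans (Ici_subset_Ici.2 (sq_nonneg ρ)))]

lemma MeasureTheory.pdf.IsUniform.norm_sq_of_annulus {Ω : Type*} [MeasurableSpace Ω]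
    {P : Measure Ω} {W : Ω → ℝ²} {ρ D : ℝ} (hW : Measurable W) (hρ : 0 ≤ ρ) (hD : 0 ≤ D)
    (h : pdf.IsUniform W (closedBall 0 D \ ball 0 ρ) P) :
    pdf.IsUniform (fun ω => ‖W ω‖ ^ 2) (Icc (ρ ^ 2) (D ^ 2)) P := by
  change Measure.map ((fun y : ℝ² => ‖y‖ ^ 2) ∘ W) P = _
  rw [← Measure.map_map (by fun_prop) hW, h, map_norm_sq_cond_annulus hρ hD]

lemma cond_Icc_Ici {p q θ : ℝ} (hpq : p < q) (hθ : p ≤ θ) :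
    volume[|Icc p q] (Ici θ) = ENNReal.ofReal ((q - θ) / (q - p)) := by
  have hinter : Icc p q ∩ Ici θ = Icc θ q := by
    ext x
    simp only [mem_inter_iff, mem_Icc, mem_Ici]
    exact ⟨fun h => ⟨h.2, h.1.2⟩, fun h => ⟨⟨hθ.trans h.1, h.2⟩, h.1⟩⟩
  rw [cond_apply measurableSet_Icc, hinter, Real.volume_Icc,
    Real.volume_Icc, ENNReal.ofReal_div_of_pos (sub_pos.2 hpq), ENNReal.div_eq_inv_mul]

lemma lintegral_cond_Icc_ofReal_affine {r s u v : ℝ} (hrs : r < s)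
    (hnonneg : ∀ y ∈ Icc r s, 0 ≤ u + v * y) :
    ∫⁻ y, ENNReal.ofReal (u + v * y) ∂volume[|Icc r s] =
      ENNReal.ofReal (u + v * ((r + s) / 2)) := by
  have hint : IntegrableOn (fun y => u + v * y) (Icc r s) :=
    (continuous_const.add (continuous_const.mul continuous_id)).integrableOn_Icc
  rw [ProbabilityTheory.cond, lintegral_smul_measure, Real.volume_Icc,
    ← ofReal_integral_eq_lintegral_ofReal hint
      ((ae_restrict_iff' measurableSet_Icc).2 (ae_of_all _ hnonneg)),
    integral_Icc_eq_integral_Ioc, ← intervalIntegral.integral_of_le hrs.le,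
    intervalIntegral.integral_add intervalIntegrable_const
      (intervalIntegral.intervalIntegrable_id.const_mul _),
    intervalIntegral.integral_const, intervalIntegral.integral_const_mul, integral_id,
    smul_eq_mul, ← ENNReal.ofReal_inv_of_pos (sub_pos.2 hrs),
    ← ENNReal.ofReal_mul (by simp [hrs.le])]
  congr 1
  have : s - r ≠ 0 := (sub_pos.2 hrs).ne'
  field_simp
  ring

theorem measure_mul_add_le_of_isUniform_Icc {Ω : Type*} [MeasurableSpace Ω] {P : Measure Ω}
    [IsFiniteMeasure P] {X Y : Ω → ℝ} {p q r s α β : ℝ} (hX : Measurable X) (hY : Measurable Y)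
    (hXY : IndepFun X Y P) (hXu : pdf.IsUniform X (Icc p q) P)
    (hYu : pdf.IsUniform Y (Icc r s) P) (hpq : p < q) (hrs : r < s)
    (hαβ : ∀ y ∈ Icc r s, α * y + β ∈ Icc p q) :
    P {ω | α * Y ω + β ≤ X ω} = ENNReal.ofReal ((q - α * ((r + s) / 2) - β) / (q - p)) := by
  set S := {z : ℝ × ℝ | α * z.2 + β ≤ z.1}
  have hS : MeasurableSet S := measurableSet_le (by fun_prop) (by fun_prop)
  have hslice : ∀ y ∈ Icc r s, volume[|Icc p q] ((fun x => (x, y)) ⁻¹' S) =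
      ENNReal.ofReal ((q - β) / (q - p) + (-α / (q - p)) * y) := fun y hy => by
    rw [show (fun x => (x, y)) ⁻¹' S = Ici (α * y + β) from rfl, cond_Icc_Ici hpq (hαβ y hy).1]
    congr 1
    ring
  calc P {ω | α * Y ω + β ≤ X ω} = P.map (fun ω => (X ω, Y ω)) S :=
        (Measure.map_apply (hX.prodMk hY) hS).symm
    _ = (volume[|Icc p q]).prod (volume[|Icc r s]) S := by
        rw [(indepFun_iff_map_prod_eq_prod_map_map hX.aemeasurable hY.aemeasurable).1 hXY,
          hXu, hYu]
    _ = ∫⁻ y, volume[|Icc p q] ((fun x => (x, y)) ⁻¹' S) ∂volume[|Icc r s] :=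
        Measure.prod_apply_symm hS
    _ = ∫⁻ y, ENNReal.ofReal ((q - β) / (q - p) + (-α / (q - p)) * y) ∂volume[|Icc r s] :=
        lintegral_congr_ae (ae_cond_of_forall_mem measurableSet_Icc hslice)
    _ = ENNReal.ofReal ((q - α * ((r + s) / 2) - β) / (q - p)) := by
        rw [lintegral_cond_Icc_ofReal_affine hrs fun y hy => ?_]
        · congr 1
          ring
        · have hyq := (hαβ y hy).2
          have hqp : 0 < q - p := sub_pos.2 hpq
          field_simp
          linarith

lemma mul_rpow_le_rpow_iff {k x y μ : ℝ} (hk : 0 < k) (hx : 0 ≤ x) (hy : 0 ≤ y) (hμ : 0 < μ) :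
    k * y ^ μ ≤ x ^ μ ↔ k ^ (1 / μ) * y ≤ x := by
  rw [← rpow_le_rpow_iff (by positivity) hx hμ, mul_rpow (by positivity) hy, ← rpow_mul hk.le,
    one_div_mul_cancel hμ.ne', rpow_one]

lemma sq_mul_rpow_neg_half (c μ : ℝ) {x : ℝ} (hx : 0 ≤ x) :
    (c * x ^ (-μ / 2)) ^ 2 = c ^ 2 * x ^ (-μ) := by
  rw [mul_pow, ← rpow_mul_natCast hx]
  norm_num

lemma mul_sq_gain_le_mul_sq_gain_iff {k₁ k₂ c x y μ : ℝ} (hk₁ : 0 < k₁) (hk₂ : 0 < k₂)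
    (hc : 0 < c) (hx : 0 < x) (hy : 0 < y) (hμ : 0 < μ) :
    k₁ * (c * x ^ (-μ / 2)) ^ 2 ≤ k₂ * (c * y ^ (-μ / 2)) ^ 2 ↔ (k₁ / k₂) ^ (1 / μ) * y ≤ x := by
  have hxμ := rpow_pos_of_pos hx μ
  have hyμ := rpow_pos_of_pos hy μ
  rw [sq_mul_rpow_neg_half c μ hx.le, sq_mul_rpow_neg_half c μ hy.le, rpow_neg hx.le,
    rpow_neg hy.le, ← mul_rpow_le_rpow_iff (div_pos hk₁ hk₂) hx.le hy.le hμ, div_mul_eq_mul_div,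
    div_le_iff₀ hk₂, ← div_eq_mul_inv, ← div_eq_mul_inv, mul_div_assoc', mul_div_assoc',
    div_le_div_iff₀ hxμ hyμ, show k₁ * c ^ 2 * y ^ μ = c ^ 2 * (k₁ * y ^ μ) by ring,
    show k₂ * c ^ 2 * x ^ μ = c ^ 2 * (x ^ μ * k₂) by ring,
    mul_le_mul_iff_right₀ (by positivity)]

lemma mul_sq_gain_rpow_neg_inv {k c x μ : ℝ} (hk : 0 < k) (hc : 0 < c) (hx : 0 < x)
    (hμ : 0 < μ) :
    (k * (c * x ^ (-μ / 2)) ^ 2) ^ (-1 / μ) = x / (k ^ (1 / μ) * c ^ (2 / μ)) := by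
  rw [sq_mul_rpow_neg_half c μ hx.le, mul_rpow hk.le (by positivity),
    mul_rpow (by positivity) (by positivity), ← rpow_natCast c 2, ← rpow_mul hc.le,
    ← rpow_mul hx.le, show -μ * (-1 / μ) = 1 by field_simp, rpow_one,
    show (-1 / μ) = -(1 / μ) by ring,
    show ((2 : ℕ) : ℝ) * -(1 / μ) = -(2 / μ) by push_cast; ring, rpow_neg hk.le, rpow_neg hc.le]
  field_simp

lemma mul_sq_gain_rpow_neg_two_inv {k c x μ : ℝ} (hk : 0 < k) (hc : 0 < c) (hx : 0 < x)
    (hμ : 0 < μ) :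
    (k * (c * x ^ (-μ / 2)) ^ 2) ^ (-2 / μ) = (x / (k ^ (1 / μ) * c ^ (2 / μ))) ^ 2 := by
  rw [← mul_sq_gain_rpow_neg_inv hk hc hx hμ, ← rpow_mul_natCast (by positivity)]
  ring_nf

lemma sq_le_mul_of_le_div_sq_gain {a b c γ l y μ : ℝ} (ha : 0 < a) (hb : 0 < b) (hc : 0 < c)
    (hγ : 0 < γ) (hl : 0 < l) (hy : 0 < y) (hμ : 0 < μ)
    (h : γ ≤ a / b * (c * l ^ (-μ)) ^ 2 / (c * y ^ (-μ / 2)) ^ 2) :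
    l ^ 2 ≤ (a / (γ * b)) ^ (1 / μ) * y := by
  have hl' : c * l ^ (-μ) = c * (l ^ 2) ^ (-μ / 2) := by
    rw [← rpow_natCast, ← rpow_mul hl.le]
    congr 2
    push_cast
    ring
  rw [le_div_iff₀ (by positivity), div_mul_eq_mul_div, le_div_iff₀ hb, hl',
    show γ * (c * y ^ (-μ / 2)) ^ 2 * b = γ * b * (c * y ^ (-μ / 2)) ^ 2 by ring,
    mul_sq_gain_le_mul_sq_gain_iff (by positivity) ha hc hy (by positivity) hμ, ← inv_div,
    inv_rpow (by positivity), inv_mul_le_iff₀ (by positivity)] at h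
  exact h

lemma sop_closed_form_eq {a b c γ l D ρ μ ψ JBmin JEmin JEmax : ℝ} (ha : 0 < a) (hb : 0 < b)
    (hc : 0 < c) (hγ : 0 < γ) (hl : 0 < l) (hρ0 : 0 ≤ ρ) (hρD : ρ < D) (hμ : 0 < μ)
    (hψ : ψ = 2 / (μ * D ^ 2) * c ^ (2 / μ) * (2 / (μ * (D ^ 2 - ρ ^ 2)) * c ^ (2 / μ)) / 4 *
      (a * b) ^ (1 / μ))
    (hJBmin : JBmin = a * (c * (D ^ 2 + l ^ 2) ^ (-μ / 2)) ^ 2)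
    (hJEmin : JEmin = b * (c * (D ^ 2 + l ^ 2) ^ (-μ / 2)) ^ 2)
    (hJEmax : JEmax = b * (c * (ρ ^ 2 + l ^ 2) ^ (-μ / 2)) ^ 2) :
    ψ * μ ^ 2 * JBmin ^ (-1 / μ) * (JEmin ^ (-1 / μ) - JEmax ^ (-1 / μ)) -
        ψ / 2 * μ ^ 2 * γ ^ (-1 / μ) * (JEmin ^ (-2 / μ) - JEmax ^ (-2 / μ)) =
      (D ^ 2 + l ^ 2 - (a / (γ * b)) ^ (1 / μ) * ((ρ ^ 2 + D ^ 2) / 2 + l ^ 2)) / D ^ 2 := by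
  have hD : D ^ 2 - ρ ^ 2 ≠ 0 := (sub_pos.2 (pow_lt_pow_left₀ hρD hρ0 two_ne_zero)).ne'
  have ha' := rpow_pos_of_pos ha (1 / μ)
  have hb' := rpow_pos_of_pos hb (1 / μ)
  have hc' := rpow_pos_of_pos hc (2 / μ)
  have hγ' := rpow_pos_of_pos hγ (1 / μ)
  rw [hψ, hJBmin, hJEmin, hJEmax, mul_sq_gain_rpow_neg_inv ha hc (by positivity) hμ,
    mul_sq_gain_rpow_neg_inv hb hc (by positivity) hμ,
    mul_sq_gain_rpow_neg_inv hb hc (by positivity) hμ,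
    mul_sq_gain_rpow_neg_two_inv hb hc (by positivity) hμ,
    mul_sq_gain_rpow_neg_two_inv hb hc (by positivity) hμ, mul_rpow ha.le hb.le,
    div_rpow ha.le (by positivity), mul_rpow hγ.le hb.le,
    show -1 / μ = -(1 / μ) by ring, rpow_neg hγ.le]
  field_simp
  ring

theorem measure_mul_norm_sq_add_le_of_isUniform {Ω : Type*} [MeasurableSpace Ω]
    {P : Measure Ω} [IsFiniteMeasure P] {U W : Ω → ℝ²} {D ρ l τ : ℝ} (hU : Measurable U)
    (hW : Measurable W) (hUu : pdf.IsUniform U (closedBall 0 D) P)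
    (hWu : pdf.IsUniform W (closedBall 0 D \ ball 0 ρ) P) (hUW : IndepFun U W P)
    (hρ0 : 0 ≤ ρ) (hρD : ρ < D) (hτ0 : 0 ≤ τ) (hτ1 : τ ≤ 1)
    (hlτ : l ^ 2 ≤ τ * (ρ ^ 2 + l ^ 2)) :
    P {ω | τ * (‖W ω‖ ^ 2 + l ^ 2) ≤ ‖U ω‖ ^ 2 + l ^ 2} =
      ENNReal.ofReal ((D ^ 2 + l ^ 2 - τ * ((ρ ^ 2 + D ^ 2) / 2 + l ^ 2)) / D ^ 2) := by
  have hD : 0 < D := hρ0.trans_lt hρD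
  have hUu' : pdf.IsUniform (fun ω => ‖U ω‖ ^ 2) (Icc 0 (D ^ 2)) P := by
    simpa using (show pdf.IsUniform U (closedBall 0 D \ ball 0 0) P by
      rwa [ball_zero, sdiff_empty]).norm_sq_of_annulus hU le_rfl hD.le
  have hUW' : IndepFun (fun ω => ‖U ω‖ ^ 2) (fun ω => ‖W ω‖ ^ 2) P :=
    hUW.comp (φ := fun x : ℝ² => ‖x‖ ^ 2) (ψ := fun x : ℝ² => ‖x‖ ^ 2)
      (by fun_prop) (by fun_prop)
  have hevent : {ω | τ * (‖W ω‖ ^ 2 + l ^ 2) ≤ ‖U ω‖ ^ 2 + l ^ 2} =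
      {ω | τ * ‖W ω‖ ^ 2 + (τ * l ^ 2 - l ^ 2) ≤ ‖U ω‖ ^ 2} := by
    ext ω
    simp only [mem_ofPred_eq]
    constructor <;> intro h <;> linarith
  rw [hevent, measure_mul_add_le_of_isUniform_Icc (by fun_prop) (by fun_prop) hUW' hUu'
    (hWu.norm_sq_of_annulus hW hρ0 hD.le) (by positivity) (by gcongr)
    fun y hy => ⟨by nlinarith [hy.1], by nlinarith [hy.2]⟩]
  congr 1
  ring

theorem sop_case_three_general
    (D ρ l m c : ℝ) (hρ0 : 0 ≤ ρ) (hρD : ρ < D) (hl : 0 < l) (hm : 0 < m)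
    (hc : 0 < c)
    (vmin vmid vmax : ℝ)
    (hvmin : vmin = c * (D ^ 2 + l ^ 2) ^ (-(m + 3) / 2))
    (hvmid : vmid = c * (ρ ^ 2 + l ^ 2) ^ (-(m + 3) / 2))
    (hvmax : vmax = c * l ^ (-(m + 3)))
    (a b : ℝ) (ha : 0 < a) (hb : 0 < b)
    {Ω : Type*} [MeasureSpace Ω] [IsProbabilityMeasure (ℙ : Measure Ω)]
    (U W : Ω → EuclideanSpace ℝ (Fin 2)) (hU : Measurable U) (hW : Measurable W)
    (hUlaw : Measure.map U (ℙ : Measure Ω) =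
      (volume (Metric.closedBall (0 : EuclideanSpace ℝ (Fin 2)) D))⁻¹ •
        volume.restrict (Metric.closedBall (0 : EuclideanSpace ℝ (Fin 2)) D))
    (hWlaw : Measure.map W (ℙ : Measure Ω) =
      (volume (Metric.closedBall (0 : EuclideanSpace ℝ (Fin 2)) D \
          Metric.ball (0 : EuclideanSpace ℝ (Fin 2)) ρ))⁻¹ •
        volume.restrict (Metric.closedBall (0 : EuclideanSpace ℝ (Fin 2)) D \
          Metric.ball (0 : EuclideanSpace ℝ (Fin 2)) ρ))
    (hindep : IndepFun U W (ℙ : Measure Ω))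
    (HB HE : Ω → ℝ)
    (hHB : ∀ ω, HB ω = c * (‖U ω‖ ^ 2 + l ^ 2) ^ (-(m + 3) / 2))
    (hHE : ∀ ω, HE ω = c * (‖W ω‖ ^ 2 + l ^ 2) ^ (-(m + 3) / 2))
    (JB JE : Ω → ℝ)
    (hJB : ∀ ω, JB ω = a * HB ω ^ 2) (hJE : ∀ ω, JE ω = b * HE ω ^ 2)
    (γth : ℝ) (hγ : 0 < γth)
    (Ξ₁ Ξ₂ ψ : ℝ)
    (hΞ₁ : Ξ₁ = 2 / ((m + 3) * D ^ 2) * c ^ (2 / (m + 3)))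
    (hΞ₂ : Ξ₂ = 2 / ((m + 3) * (D ^ 2 - ρ ^ 2)) * c ^ (2 / (m + 3)))
    (hψ : ψ = Ξ₁ * Ξ₂ / 4 * (a * b) ^ (1 / (m + 3)))
    (JBmin JEmin JEmax : ℝ)
    (hJBmin : JBmin = a * vmin ^ 2)
    (hJEmin : JEmin = b * vmin ^ 2) (hJEmax : JEmax = b * vmid ^ 2)
    (hcase₁ : a / b < γth) (hcase₂ : γth ≤ a / b * vmax ^ 2 / vmid ^ 2) :
    (ℙ : Measure Ω) {ω | JB ω ≤ γth * JE ω} =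
      ENNReal.ofReal
        (ψ * (m + 3) ^ 2 * JBmin ^ (-1 / (m + 3)) *
            (JEmin ^ (-1 / (m + 3)) - JEmax ^ (-1 / (m + 3))) -
          ψ / 2 * (m + 3) ^ 2 * γth ^ (-1 / (m + 3)) *
            (JEmin ^ (-2 / (m + 3)) - JEmax ^ (-2 / (m + 3)))) := by
  have hμ : 0 < m + 3 := by linarith
  set τ := (a / (γth * b)) ^ (1 / (m + 3))
  have hτ1 : τ ≤ 1 := rpow_le_one (by positivity)
    ((div_le_one (by positivity)).2 ((div_lt_iff₀ hb).1 hcase₁).le) (by positivity)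
  have hlτ : l ^ 2 ≤ τ * (ρ ^ 2 + l ^ 2) := by
    rw [hvmax, hvmid] at hcase₂
    exact sq_le_mul_of_le_div_sq_gain ha hb hc hγ hl (by positivity) hμ hcase₂
  have hevent : {ω | JB ω ≤ γth * JE ω} =
      {ω | τ * (‖W ω‖ ^ 2 + l ^ 2) ≤ ‖U ω‖ ^ 2 + l ^ 2} := by
    ext ω
    rw [mem_ofPred_eq, mem_ofPred_eq, hJB, hJE, hHB, hHE, ← mul_assoc]
    exact mul_sq_gain_le_mul_sq_gain_iff ha (by positivity) hc (by positivity) (by positivity) hμ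
  rw [hevent, measure_mul_norm_sq_add_le_of_isUniform hU hW hUlaw hWlaw hindep hρ0 hρD
    (by positivity) hτ1 hlτ, sop_closed_form_eq ha hb hc hγ hl hρ0 hρD hμ (by rw [hψ, hΞ₁, hΞ₂])
    (by rw [hJBmin, hvmin]) (by rw [hJEmin, hvmin]) (by rw [hJEmax, hvmid])]

/-- Theorem 3, case 3: if `χ² < γ_th ≤ χ²·v_max²/v_mid²` (with `χ² = a/b`), then
`Pr(J_B ≤ γ_th·J_E) = S₂`. -/
theorem sop_case_three
    (D ρ l m c : ℝ) (hD : 0 < D) (hρ0 : 0 ≤ ρ) (hρD : ρ < D) (hl : 0 < l) (hm : 0 < m)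
    (hc : 0 < c)
    (vmin vmid vmax : ℝ)
    (hvmin : vmin = c * (D ^ 2 + l ^ 2) ^ (-(m + 3) / 2))
    (hvmid : vmid = c * (ρ ^ 2 + l ^ 2) ^ (-(m + 3) / 2))
    (hvmax : vmax = c * l ^ (-(m + 3)))
    (a b : ℝ) (ha : 0 < a) (hb : 0 < b)
    {Ω : Type*} [MeasureSpace Ω] [IsProbabilityMeasure (ℙ : Measure Ω)]
    (U W : Ω → EuclideanSpace ℝ (Fin 2)) (hU : Measurable U) (hW : Measurable W)
    (hUlaw : Measure.map U (ℙ : Measure Ω) =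
      (volume (Metric.closedBall (0 : EuclideanSpace ℝ (Fin 2)) D))⁻¹ •
        volume.restrict (Metric.closedBall (0 : EuclideanSpace ℝ (Fin 2)) D))
    (hWlaw : Measure.map W (ℙ : Measure Ω) =
      (volume (Metric.closedBall (0 : EuclideanSpace ℝ (Fin 2)) D \
          Metric.ball (0 : EuclideanSpace ℝ (Fin 2)) ρ))⁻¹ •
        volume.restrict (Metric.closedBall (0 : EuclideanSpace ℝ (Fin 2)) D \
          Metric.ball (0 : EuclideanSpace ℝ (Fin 2)) ρ))
    (hindep : IndepFun U W (ℙ : Measure Ω))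
    (HB HE : Ω → ℝ)
    (hHB : ∀ ω, HB ω = c * (‖U ω‖ ^ 2 + l ^ 2) ^ (-(m + 3) / 2))
    (hHE : ∀ ω, HE ω = c * (‖W ω‖ ^ 2 + l ^ 2) ^ (-(m + 3) / 2))
    (JB JE : Ω → ℝ)
    (hJB : ∀ ω, JB ω = a * HB ω ^ 2) (hJE : ∀ ω, JE ω = b * HE ω ^ 2)
    (γth : ℝ) (hγ : 0 < γth)
    (Ξ₁ Ξ₂ ψ : ℝ)
    (hΞ₁ : Ξ₁ = 2 / ((m + 3) * D ^ 2) * c ^ (2 / (m + 3)))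
    (hΞ₂ : Ξ₂ = 2 / ((m + 3) * (D ^ 2 - ρ ^ 2)) * c ^ (2 / (m + 3)))
    (hψ : ψ = Ξ₁ * Ξ₂ / 4 * (a * b) ^ (1 / (m + 3)))
    (JBmin JBmax JEmin JEmax : ℝ)
    (hJBmin : JBmin = a * vmin ^ 2) (hJBmax : JBmax = a * vmax ^ 2)
    (hJEmin : JEmin = b * vmin ^ 2) (hJEmax : JEmax = b * vmid ^ 2)
    (hcase₁ : a / b < γth) (hcase₂ : γth ≤ a / b * vmax ^ 2 / vmid ^ 2) :
    (ℙ : Measure Ω) {ω | JB ω ≤ γth * JE ω} =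
      ENNReal.ofReal
        (ψ * (m + 3) ^ 2 * JBmin ^ (-1 / (m + 3)) *
            (JEmin ^ (-1 / (m + 3)) - JEmax ^ (-1 / (m + 3))) -
          ψ / 2 * (m + 3) ^ 2 * γth ^ (-1 / (m + 3)) *
            (JEmin ^ (-2 / (m + 3)) - JEmax ^ (-2 / (m + 3)))) :=
  sop_case_three_general D ρ l m c hρ0 hρD hl hm hc vmin vmid vmax hvmin hvmid hvmax a b ha hb U W
    hU hW hUlaw hWlaw hindep HB HE hHB hHE JB JE hJB hJE γth hγ Ξ₁ Ξ₂ ψ hΞ₁ hΞ₂ hψ JBmin JEmin JEmax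
    hJBmin hJEmin hJEmax hcase₁ hcase₂
end

section
/- (Equation (19), case 5.) If χ ≥ v_mid/v_min, then χ·H_B ≥ H_E holds almost surely, and the average secrecy capacity equals E[C_s] = E[(1/2)·ln((1 + a·H_B²)/(1 + b·H_E²))], i.e., the double integral ∫_{v_min}^{v_max} ∫_{v_min}^{v_mid} (1/2)·ln((1 + a x²)/(1 + b y²)) · f_{H_B}(x) · f_{H_E}(y) dy dx, where f_{H_B}(x) = Ξ₁ x^{−2/(m+3)−1} and f_{H_E}(y) = Ξ₂ y^{−2/(m+3)−1}. -/
/-!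
Off a null set Bob lies in the disc of radius `D` and Eve outside the disc of radius `ρ`, so
`H_E ≤ v_mid ≤ χ v_min ≤ χ H_B` and `C_s` is almost surely the unclipped logarithm, which splits
as `½ ln(1 + a H_B²) - ½ ln(1 + b H_E²)`. For a point uniform on the annulus `ρ ≤ |u| ≤ D`,
polar coordinates and the substitution `x = c (r² + l²)^(-(m+3)/2)` (under which `r dr` becomes a
multiple of `x^(-2/(m+3)-1) dx`) show that the gain has density `f_H`. As both densities have
mass one, the difference of the two expectations equals the double integral against
`f_{H_B}(x) f_{H_E}(y)`.
-/

open MeasureTheory ProbabilityTheory Metric Set Real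

noncomputable def channelGain (c l m r : ℝ) : ℝ := c * (r ^ 2 + l ^ 2) ^ (-(m + 3) / 2)

section channelGain

variable {c l m : ℝ}

lemma channelGain_pos (hc : 0 < c) (hl : 0 < l) (r : ℝ) : 0 < channelGain c l m r :=
  mul_pos hc (rpow_pos_of_pos (by positivity) _)

lemma channelGain_zero (hl : 0 < l) : channelGain c l m 0 = c * l ^ (-(m + 3)) := by
  rw [channelGain, zero_pow two_ne_zero, zero_add, ← rpow_natCast, ← rpow_mul hl.le]
  congr 2
  push_cast
  ring

lemma channelGain_antitoneOn (hc : 0 ≤ c) (hl : 0 < l) (hm : 0 ≤ m + 3) :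
    AntitoneOn (channelGain c l m) (Ici 0) := by
  intro r hr s hs hrs
  have : r ^ 2 ≤ s ^ 2 := pow_le_pow_left₀ hr hrs 2
  exact mul_le_mul_of_nonneg_left
    (rpow_le_rpow_of_nonpos (by positivity) (by linarith) (by linarith)) hc

lemma channelGain_le_mul_channelGain (hc : 0 < c) (hl : 0 < l) (hm : 0 ≤ m + 3)
    {ρ D r s χ : ℝ} (hρ : 0 ≤ ρ) (hρs : ρ ≤ s) (hr : 0 ≤ r) (hrD : r ≤ D)
    (hχ : channelGain c l m ρ / channelGain c l m D ≤ χ) :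
    channelGain c l m s ≤ χ * channelGain c l m r := by
  have hgain := channelGain_antitoneOn hc.le hl hm
  have hD := channelGain_pos (m := m) hc hl D
  calc channelGain c l m s ≤ channelGain c l m ρ := hgain hρ (hρ.trans hρs) hρs
    _ ≤ χ * channelGain c l m D := (div_le_iff₀ hD).mp hχ
    _ ≤ χ * channelGain c l m r := mul_le_mul_of_nonneg_left (hgain hr (hr.trans hrD) hrD)
        ((div_pos (channelGain_pos hc hl ρ) hD).le.trans hχ)

lemma continuous_channelGain (hl : 0 < l) : Continuous (channelGain c l m) :=
  continuous_const.mul <| (by fun_prop : Continuous fun r : ℝ => r ^ 2 + l ^ 2).rpow_const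
    fun _ => Or.inl (by positivity)

lemma hasDerivAt_channelGain (hl : 0 < l) (r : ℝ) :
    HasDerivAt (channelGain c l m)
      (-(c * (m + 3)) * r * (r ^ 2 + l ^ 2) ^ (-(m + 3) / 2 - 1)) r := by
  have hsq : HasDerivAt (fun r : ℝ => r ^ 2 + l ^ 2) (2 * r) r := by
    simpa using (hasDerivAt_pow 2 r).add_const (l ^ 2)
  refine (((hasDerivAt_rpow_const (p := -(m + 3) / 2)
    (Or.inl (by positivity : r ^ 2 + l ^ 2 ≠ 0))).comp r hsq).const_mul c).congr_deriv ?_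
  ring

lemma channelGain_rpow_mul_deriv (hc : 0 < c) (hl : 0 < l) (hm : m + 3 ≠ 0) (r : ℝ) :
    channelGain c l m r ^ (-2 / (m + 3) - 1) *
        (-(c * (m + 3)) * r * (r ^ 2 + l ^ 2) ^ (-(m + 3) / 2 - 1)) =
      -((m + 3) / c ^ (2 / (m + 3))) * r := by
  have ht : 0 < r ^ 2 + l ^ 2 := by positivity
  set t := r ^ 2 + l ^ 2
  have hpow : (t ^ (-(m + 3) / 2)) ^ (-2 / (m + 3) - 1) * t ^ (-(m + 3) / 2 - 1) = 1 := by
    rw [← rpow_mul ht.le, ← rpow_add ht, show -(m + 3) / 2 * (-2 / (m + 3) - 1) +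
      (-(m + 3) / 2 - 1) = 0 by field_simp; ring, rpow_zero]
  have hcpow : c ^ (-2 / (m + 3) - 1) * c = (c ^ (2 / (m + 3)))⁻¹ := by
    rw [← rpow_add_one hc.ne', ← rpow_neg hc.le]
    congr 1
    ring
  rw [channelGain, mul_rpow hc.le (rpow_nonneg ht.le _)]
  calc c ^ (-2 / (m + 3) - 1) * (t ^ (-(m + 3) / 2)) ^ (-2 / (m + 3) - 1) *
        (-(c * (m + 3)) * r * t ^ (-(m + 3) / 2 - 1))
      = -(c ^ (-2 / (m + 3) - 1) * c) * (m + 3) * r *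
          ((t ^ (-(m + 3) / 2)) ^ (-2 / (m + 3) - 1) * t ^ (-(m + 3) / 2 - 1)) := by ring
    _ = _ := by rw [hpow, hcpow]; ring

lemma integral_mul_comp_channelGain (hc : 0 < c) (hl : 0 < l) (hm : m + 3 ≠ 0) {g : ℝ → ℝ}
    (hg : Continuous g) (ρ D : ℝ) :
    ∫ r in ρ..D, r * g (channelGain c l m r) =
      c ^ (2 / (m + 3)) / (m + 3) *
        ∫ x in channelGain c l m D..channelGain c l m ρ, g x * x ^ (-2 / (m + 3) - 1) := by
  have hderiv : Continuous fun r : ℝ =>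
      -(c * (m + 3)) * r * (r ^ 2 + l ^ 2) ^ (-(m + 3) / 2 - 1) :=
    (continuous_const_mul _).mul <|
      (by fun_prop : Continuous fun r : ℝ => r ^ 2 + l ^ 2).rpow_const
        fun _ => Or.inl (by positivity)
  have hsubst := intervalIntegral.integral_comp_mul_deriv' (a := ρ) (b := D)
    (g := fun x => g x * x ^ (-2 / (m + 3) - 1))
    (fun r _ => hasDerivAt_channelGain (c := c) (m := m) hl r) hderiv.continuousOn
    (hg.continuousOn.mul <| continuousOn_id.rpow_const <| by
      rintro _ ⟨r, -, rfl⟩; exact Or.inl (channelGain_pos hc hl r).ne')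
  have hpt : ∀ r, g (channelGain c l m r) * channelGain c l m r ^ (-2 / (m + 3) - 1) *
      (-(c * (m + 3)) * r * (r ^ 2 + l ^ 2) ^ (-(m + 3) / 2 - 1)) =
        -((m + 3) / c ^ (2 / (m + 3))) * (r * g (channelGain c l m r)) := by
    intro r
    rw [mul_assoc, channelGain_rpow_mul_deriv hc hl hm]
    ring
  simp only [Function.comp_def, hpt, intervalIntegral.integral_const_mul] at hsubst
  have hcq : c ^ (2 / (m + 3)) ≠ 0 := (rpow_pos_of_pos hc _).ne'
  rw [intervalIntegral.integral_symm (channelGain c l m ρ), ← hsubst]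
  field_simp

end channelGain

/-- The paper's `f_H`, with `Ξ` for the annulus `ρ ≤ |u| ≤ D`. -/
noncomputable def gainDensity (c m ρ D x : ℝ) : ℝ :=
  2 / ((m + 3) * (D ^ 2 - ρ ^ 2)) * c ^ (2 / (m + 3)) * x ^ (-2 / (m + 3) - 1)

lemma intervalIntegrable_gainDensity (c m ρ D : ℝ) {p q : ℝ} (hp : 0 < p) (hq : 0 < q) :
    IntervalIntegrable (gainDensity c m ρ D) volume p q :=
  (intervalIntegral.intervalIntegrable_rpow (Or.inr (notMem_uIcc_of_lt hp hq))).const_mul _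

lemma integral_gainDensity {c l m ρ D : ℝ} (hc : 0 < c) (hl : 0 < l) (hm : m + 3 ≠ 0)
    (hρ : 0 ≤ ρ) (hρD : ρ < D) :
    ∫ x in channelGain c l m D..channelGain c l m ρ, gainDensity c m ρ D x = 1 := by
  have hmass := integral_mul_comp_channelGain hc hl hm (g := fun _ => 1) continuous_const ρ D
  simp only [mul_one, one_mul, integral_id] at hmass
  have hD2 : D ^ 2 - ρ ^ 2 ≠ 0 := (sub_pos.mpr (pow_lt_pow_left₀ hρD hρ two_ne_zero)).ne'
  simp only [gainDensity]
  rw [intervalIntegral.integral_const_mul]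
  calc 2 / ((m + 3) * (D ^ 2 - ρ ^ 2)) * c ^ (2 / (m + 3)) *
        ∫ x in channelGain c l m D..channelGain c l m ρ, x ^ (-2 / (m + 3) - 1)
      = 2 / (D ^ 2 - ρ ^ 2) * (c ^ (2 / (m + 3)) / (m + 3) *
        ∫ x in channelGain c l m D..channelGain c l m ρ, x ^ (-2 / (m + 3) - 1)) := by
        rw [div_mul_eq_div_div]; ring
    _ = 1 := by rw [← hmass]; field_simp

section annulus

variable {ρ D : ℝ}

lemma mem_closedBall_diff_ball_iff_norm_mem_Icc {E : Type*} [SeminormedAddCommGroup E]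
    {u : E} :
    u ∈ closedBall (0 : E) D \ ball 0 ρ ↔ ‖u‖ ∈ Icc ρ D := by
  simp [and_comm]

lemma volume_closedBall_diff_ball (hρ : 0 ≤ ρ) (hρD : ρ ≤ D) :
    volume (closedBall (0 : EuclideanSpace ℝ (Fin 2)) D \ ball 0 ρ) =
      ENNReal.ofReal (π * (D ^ 2 - ρ ^ 2)) := by
  rw [measure_sdiff ((ball_subset_ball hρD).trans ball_subset_closedBall)
      measurableSet_ball.nullMeasurableSet measure_ball_lt_top.ne,
    EuclideanSpace.volume_closedBall_fin_two, EuclideanSpace.volume_ball_fin_two,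
    ← ENNReal.ofReal_pow (hρ.trans hρD), ← ENNReal.ofReal_pow hρ,
    ← ENNReal.ofReal_mul (by positivity), ← ENNReal.ofReal_mul (by positivity),
    ← ENNReal.ofReal_sub _ (by positivity)]
  ring_nf

lemma setIntegral_closedBall_diff_ball_fun_norm (F : ℝ → ℝ) (hρ : 0 ≤ ρ) (hρD : ρ ≤ D) :
    ∫ u in closedBall (0 : EuclideanSpace ℝ (Fin 2)) D \ ball 0 ρ, F ‖u‖ =
      2 * π * ∫ r in ρ..D, r * F r := by
  have hradial : ∫ y in Ioi (0 : ℝ), y ^ (2 - 1) • (Icc ρ D).indicator F y =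
      ∫ r in ρ..D, r * F r := by
    simp only [Nat.reduceSub, pow_one, smul_eq_mul,
      fun y => (indicator_mul_right (Icc ρ D) (fun r => r) F (i := y)).symm]
    rw [integral_congr_ae (ae_restrict_of_ae (indicator_ae_eq_of_ae_eq_set Ioc_ae_eq_Icc.symm)),
      setIntegral_indicator measurableSet_Ioc,
      inter_eq_right.mpr (Ioc_subset_Ioi_self.trans (Ioi_subset_Ioi hρ)),
      intervalIntegral.integral_of_le hρD]
  have hball : volume.real (ball (0 : EuclideanSpace ℝ (Fin 2)) 1) = π := by
    simp [measureReal_def, EuclideanSpace.volume_ball_fin_two, pi_pos.le]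
  rw [← integral_indicator (measurableSet_closedBall.diff measurableSet_ball)]
  have hset : closedBall (0 : EuclideanSpace ℝ (Fin 2)) D \ ball 0 ρ = (‖·‖) ⁻¹' Icc ρ D :=
    ext fun _ => mem_closedBall_diff_ball_iff_norm_mem_Icc
  have hind : (closedBall 0 D \ ball 0 ρ).indicator (fun u => F ‖u‖) =
      fun u : EuclideanSpace ℝ (Fin 2) => (Icc ρ D).indicator F ‖u‖ :=
    funext fun u => by rw [hset]; exact indicator_comp_right (‖·‖)
  rw [hind, integral_fun_norm_addHaar, finrank_euclideanSpace_fin, hball, hradial]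
  simp only [nsmul_eq_mul, smul_eq_mul]
  push_cast
  ring

lemma integral_fun_norm_uniform_closedBall_diff_ball (F : ℝ → ℝ) (hρ : 0 ≤ ρ) (hρD : ρ ≤ D) :
    ∫ u, F ‖u‖ ∂((volume (closedBall (0 : EuclideanSpace ℝ (Fin 2)) D \ ball 0 ρ))⁻¹ •
        volume.restrict (closedBall (0 : EuclideanSpace ℝ (Fin 2)) D \ ball 0 ρ)) =
      2 / (D ^ 2 - ρ ^ 2) * ∫ r in ρ..D, r * F r := by
  rw [integral_smul_measure, volume_closedBall_diff_ball hρ hρD,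
    setIntegral_closedBall_diff_ball_fun_norm F hρ hρD, ENNReal.toReal_inv,
    ENNReal.toReal_ofReal (mul_nonneg pi_pos.le (sub_nonneg.mpr (pow_le_pow_left₀ hρ hρD 2))),
    smul_eq_mul, mul_inv]
  calc π⁻¹ * (D ^ 2 - ρ ^ 2)⁻¹ * (2 * π * ∫ r in ρ..D, r * F r)
      = (π⁻¹ * π) * (2 / (D ^ 2 - ρ ^ 2)) * ∫ r in ρ..D, r * F r := by ring
    _ = _ := by rw [inv_mul_cancel₀ pi_ne_zero, one_mul]

end annulus

lemma intervalIntegral_integral_sub_mul_mul {F G f g : ℝ → ℝ} {a₁ b₁ a₂ b₂ : ℝ}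
    (hf : IntervalIntegrable f volume a₁ b₁)
    (hFf : IntervalIntegrable (fun x => F x * f x) volume a₁ b₁)
    (hg : IntervalIntegrable g volume a₂ b₂)
    (hGg : IntervalIntegrable (fun y => G y * g y) volume a₂ b₂)
    (hf1 : ∫ x in a₁..b₁, f x = 1) (hg1 : ∫ y in a₂..b₂, g y = 1) :
    ∫ x in a₁..b₁, ∫ y in a₂..b₂, (F x - G y) * f x * g y =
      (∫ x in a₁..b₁, F x * f x) - ∫ y in a₂..b₂, G y * g y := by
  have hinner : ∀ x, ∫ y in a₂..b₂, (F x - G y) * f x * g y =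
      F x * f x - f x * ∫ y in a₂..b₂, G y * g y := by
    intro x
    have hsplit : ∀ y, (F x - G y) * f x * g y = F x * f x * g y - f x * (G y * g y) :=
      fun y => by ring
    simp only [hsplit]
    rw [intervalIntegral.integral_sub (hg.const_mul _) (hGg.const_mul _),
      intervalIntegral.integral_const_mul, intervalIntegral.integral_const_mul, hg1, mul_one]
  simp only [hinner]
  rw [intervalIntegral.integral_sub hFf (hf.mul_const _), intervalIntegral.integral_mul_const,
    hf1, one_mul]

section law

variable {Ω : Type*} [MeasurableSpace Ω] {μ : Measure Ω}

lemma ae_mem_of_map_eq_smul_restrict {α : Type*} [MeasurableSpace α] {ν : Measure α}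
    {X : Ω → α} {S : Set α} {k : ENNReal} (hX : AEMeasurable X μ) (hS : MeasurableSet S)
    (hlaw : μ.map X = k • ν.restrict S) : ∀ᵐ ω ∂μ, X ω ∈ S :=
  ae_of_ae_map hX (hlaw ▸ Measure.ae_smul_measure (ae_restrict_mem hS) k)

lemma integrable_comp_of_ae_mem_Icc [IsFiniteMeasure μ] {g : ℝ → ℝ} (hg : Continuous g)
    {Y : Ω → ℝ} (hY : AEStronglyMeasurable Y μ) {p q : ℝ} (hbd : ∀ᵐ ω ∂μ, Y ω ∈ Icc p q) :
    Integrable (fun ω => g (Y ω)) μ := by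
  obtain ⟨C, hC⟩ := isCompact_Icc.exists_bound_of_continuousOn hg.continuousOn
  exact .of_bound (hg.comp_aestronglyMeasurable hY) C (hbd.mono fun ω h => hC _ h)

variable {c l m : ℝ} {X : Ω → EuclideanSpace ℝ (Fin 2)}

lemma ae_norm_mem_Icc_of_map_eq {ρ D : ℝ} {k : ENNReal} (hX : AEMeasurable X μ)
    (hlaw : μ.map X =
      k • volume.restrict (closedBall (0 : EuclideanSpace ℝ (Fin 2)) D \ ball 0 ρ)) :
    ∀ᵐ ω ∂μ, ‖X ω‖ ∈ Icc ρ D :=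
  (ae_mem_of_map_eq_smul_restrict hX (measurableSet_closedBall.diff measurableSet_ball)
    hlaw).mono fun _ => mem_closedBall_diff_ball_iff_norm_mem_Icc.mp

lemma integrable_comp_channelGain_norm [IsFiniteMeasure μ] (hc : 0 < c) (hl : 0 < l)
    (hm : 0 ≤ m + 3) (hX : AEStronglyMeasurable X μ) {g : ℝ → ℝ} (hg : Continuous g) :
    Integrable (fun ω => g (channelGain c l m ‖X ω‖)) μ :=
  integrable_comp_of_ae_mem_Icc hg
    (((continuous_channelGain hl).comp continuous_norm).comp_aestronglyMeasurable hX)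
    (ae_of_all _ fun _ => ⟨(channelGain_pos hc hl _).le,
      channelGain_antitoneOn hc.le hl hm self_mem_Ici (norm_nonneg _) (norm_nonneg _)⟩)

lemma integral_comp_channelGain_norm_of_map_eq {ρ D : ℝ} (hc : 0 < c) (hl : 0 < l)
    (hm : m + 3 ≠ 0) (hρ : 0 ≤ ρ) (hρD : ρ ≤ D) (hX : AEMeasurable X μ)
    (hlaw : μ.map X = (volume (closedBall (0 : EuclideanSpace ℝ (Fin 2)) D \ ball 0 ρ))⁻¹ •
        volume.restrict (closedBall (0 : EuclideanSpace ℝ (Fin 2)) D \ ball 0 ρ))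
    {g : ℝ → ℝ} (hg : Continuous g) :
    ∫ ω, g (channelGain c l m ‖X ω‖) ∂μ =
      ∫ x in channelGain c l m D..channelGain c l m ρ, g x * gainDensity c m ρ D x := by
  have hcont : Continuous fun u : EuclideanSpace ℝ (Fin 2) => g (channelGain c l m ‖u‖) :=
    hg.comp ((continuous_channelGain hl).comp continuous_norm)
  rw [← integral_map hX hcont.aestronglyMeasurable, hlaw,
    integral_fun_norm_uniform_closedBall_diff_ball (fun r => g (channelGain c l m r)) hρ hρD,
    integral_mul_comp_channelGain hc hl hm hg, ← intervalIntegral.integral_const_mul,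
    ← intervalIntegral.integral_const_mul]
  congr 1
  funext x
  rw [gainDensity, div_mul_eq_div_div]
  ring

lemma integral_sub_comp_channelGain_norm [IsProbabilityMeasure μ] (hc : 0 < c) (hl : 0 < l)
    (hm : 0 < m + 3) {ρ₁ D₁ ρ₂ D₂ : ℝ} (hρ₁ : 0 ≤ ρ₁) (hρD₁ : ρ₁ < D₁) (hρ₂ : 0 ≤ ρ₂)
    (hρD₂ : ρ₂ < D₂) {Y : Ω → EuclideanSpace ℝ (Fin 2)} (hX : AEMeasurable X μ)
    (hY : AEMeasurable Y μ)
    (hXlaw : μ.map X =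
      (volume (closedBall (0 : EuclideanSpace ℝ (Fin 2)) D₁ \ ball 0 ρ₁))⁻¹ •
        volume.restrict (closedBall (0 : EuclideanSpace ℝ (Fin 2)) D₁ \ ball 0 ρ₁))
    (hYlaw : μ.map Y =
      (volume (closedBall (0 : EuclideanSpace ℝ (Fin 2)) D₂ \ ball 0 ρ₂))⁻¹ •
        volume.restrict (closedBall (0 : EuclideanSpace ℝ (Fin 2)) D₂ \ ball 0 ρ₂))
    {F G : ℝ → ℝ} (hF : Continuous F) (hG : Continuous G) :
    ∫ ω, (F (channelGain c l m ‖X ω‖) - G (channelGain c l m ‖Y ω‖)) ∂μ =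
      ∫ x in channelGain c l m D₁..channelGain c l m ρ₁,
        ∫ y in channelGain c l m D₂..channelGain c l m ρ₂,
          (F x - G y) * gainDensity c m ρ₁ D₁ x * gainDensity c m ρ₂ D₂ y := by
  have hf := intervalIntegrable_gainDensity c m ρ₁ D₁ (channelGain_pos (m := m) hc hl D₁)
    (channelGain_pos (m := m) hc hl ρ₁)
  have hg := intervalIntegrable_gainDensity c m ρ₂ D₂ (channelGain_pos (m := m) hc hl D₂)
    (channelGain_pos (m := m) hc hl ρ₂)
  rw [integral_sub (integrable_comp_channelGain_norm hc hl hm.le hX.aestronglyMeasurable hF)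
      (integrable_comp_channelGain_norm hc hl hm.le hY.aestronglyMeasurable hG),
    integral_comp_channelGain_norm_of_map_eq hc hl hm.ne' hρ₁ hρD₁.le hX hXlaw hF,
    integral_comp_channelGain_norm_of_map_eq hc hl hm.ne' hρ₂ hρD₂.le hY hYlaw hG,
    intervalIntegral_integral_sub_mul_mul hf (hf.continuousOn_mul hF.continuousOn) hg
      (hg.continuousOn_mul hG.continuousOn) (integral_gainDensity hc hl hm.ne' hρ₁ hρD₁)
      (integral_gainDensity hc hl hm.ne' hρ₂ hρD₂)]

end law

theorem asc_case_five_general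
    (D ρ l m c : ℝ) (hD : 0 < D) (hρ0 : 0 ≤ ρ) (hρD : ρ < D) (hl : 0 < l) (hm : 0 < m)
    (hc : 0 < c)
    (vmin vmid vmax : ℝ)
    (hvmin : vmin = c * (D ^ 2 + l ^ 2) ^ (-(m + 3) / 2))
    (hvmid : vmid = c * (ρ ^ 2 + l ^ 2) ^ (-(m + 3) / 2))
    (hvmax : vmax = c * l ^ (-(m + 3)))
    (a b : ℝ) (ha : 0 < a) (hb : 0 < b)
    {Ω : Type*} [MeasureSpace Ω] [IsProbabilityMeasure (ℙ : Measure Ω)]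
    (U W : Ω → EuclideanSpace ℝ (Fin 2)) (hU : Measurable U) (hW : Measurable W)
    (hUlaw : Measure.map U (ℙ : Measure Ω) =
      (volume (Metric.closedBall (0 : EuclideanSpace ℝ (Fin 2)) D))⁻¹ •
        volume.restrict (Metric.closedBall (0 : EuclideanSpace ℝ (Fin 2)) D))
    (hWlaw : Measure.map W (ℙ : Measure Ω) =
      (volume (Metric.closedBall (0 : EuclideanSpace ℝ (Fin 2)) D \
          Metric.ball (0 : EuclideanSpace ℝ (Fin 2)) ρ))⁻¹ •
        volume.restrict (Metric.closedBall (0 : EuclideanSpace ℝ (Fin 2)) D \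
          Metric.ball (0 : EuclideanSpace ℝ (Fin 2)) ρ))
    (HB HE : Ω → ℝ)
    (hHB : ∀ ω, HB ω = c * (‖U ω‖ ^ 2 + l ^ 2) ^ (-(m + 3) / 2))
    (hHE : ∀ ω, HE ω = c * (‖W ω‖ ^ 2 + l ^ 2) ^ (-(m + 3) / 2))
    (Ξ₁ Ξ₂ : ℝ)
    (hΞ₁ : Ξ₁ = 2 / ((m + 3) * D ^ 2) * c ^ (2 / (m + 3)))
    (hΞ₂ : Ξ₂ = 2 / ((m + 3) * (D ^ 2 - ρ ^ 2)) * c ^ (2 / (m + 3)))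
    (χ : ℝ)
    (Cs : Ω → ℝ)
    (hCs : ∀ ω, Cs ω =
      if HE ω ≤ χ * HB ω then
        1 / 2 * Real.log ((1 + a * HB ω ^ 2) / (1 + b * HE ω ^ 2))
      else 0)
    (hcase : vmid / vmin ≤ χ) :
    (∀ᵐ ω ∂(ℙ : Measure Ω), HE ω ≤ χ * HB ω) ∧
      (∫ ω, Cs ω ∂(ℙ : Measure Ω) =
        ∫ ω, 1 / 2 * Real.log ((1 + a * HB ω ^ 2) / (1 + b * HE ω ^ 2))
          ∂(ℙ : Measure Ω)) ∧
      (∫ ω, Cs ω ∂(ℙ : Measure Ω) =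
        ∫ x in vmin..vmax, ∫ y in vmin..vmid,
          1 / 2 * Real.log ((1 + a * x ^ 2) / (1 + b * y ^ 2)) *
            (Ξ₁ * x ^ (-2 / (m + 3) - 1)) * (Ξ₂ * y ^ (-2 / (m + 3) - 1))) := by
  have hm3 : 0 < m + 3 := by linarith
  obtain rfl : HB = fun ω => channelGain c l m ‖U ω‖ := funext hHB
  obtain rfl : HE = fun ω => channelGain c l m ‖W ω‖ := funext hHE
  obtain rfl : vmin = channelGain c l m D := hvmin
  obtain rfl : vmid = channelGain c l m ρ := hvmid
  obtain rfl : vmax = channelGain c l m 0 := by rw [hvmax, channelGain_zero hl]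
  rw [← sdiff_empty (s := closedBall _ D), ← ball_zero (x := (0 : EuclideanSpace ℝ (Fin 2)))]
    at hUlaw
  have hsecure : ∀ᵐ ω ∂(ℙ : Measure Ω),
      channelGain c l m ‖W ω‖ ≤ χ * channelGain c l m ‖U ω‖ := by
    filter_upwards [ae_norm_mem_Icc_of_map_eq hU.aemeasurable hUlaw,
      ae_norm_mem_Icc_of_map_eq hW.aemeasurable hWlaw] with ω hUω hWω
    exact channelGain_le_mul_channelGain hc hl hm3.le hρ0 hWω.1 (norm_nonneg _) hUω.2 hcase
  have hCs_ae : Cs =ᵐ[ℙ] fun ω => 1 / 2 * log ((1 + a * channelGain c l m ‖U ω‖ ^ 2) /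
      (1 + b * channelGain c l m ‖W ω‖ ^ 2)) :=
    hsecure.mono fun ω h => by rw [hCs, if_pos h]
  refine ⟨hsecure, integral_congr_ae hCs_ae, ?_⟩
  have hlog : ∀ x y : ℝ, 1 / 2 * log ((1 + a * x ^ 2) / (1 + b * y ^ 2)) =
      1 / 2 * log (1 + a * x ^ 2) - 1 / 2 * log (1 + b * y ^ 2) :=
    fun x y => by rw [log_div (by positivity) (by positivity)]; ring
  have hdensityB : ∀ x, Ξ₁ * x ^ (-2 / (m + 3) - 1) = gainDensity c m 0 D x :=
    fun x => by simp [hΞ₁, gainDensity]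
  have hdensityE : ∀ y, Ξ₂ * y ^ (-2 / (m + 3) - 1) = gainDensity c m ρ D y :=
    fun y => by rw [hΞ₂, gainDensity]
  rw [integral_congr_ae hCs_ae]
  simp only [hlog, hdensityB, hdensityE]
  exact integral_sub_comp_channelGain_norm hc hl hm3 le_rfl hD hρ0 hρD hU.aemeasurable
    hW.aemeasurable hUlaw hWlaw (F := fun x => 1 / 2 * log (1 + a * x ^ 2))
    (G := fun y => 1 / 2 * log (1 + b * y ^ 2)) (by fun_prop (disch := intro; positivity))
    (by fun_prop (disch := intro; positivity))

/-- Equation (19), case 5: if `χ ≥ v_mid/v_min`, then `χ·H_B ≥ H_E` almost surely, and the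
average secrecy capacity `E[C_s]` equals `E[(1/2)·ln((1 + a·H_B²)/(1 + b·H_E²))]`, i.e. the
double integral
`∫_{v_min}^{v_max} ∫_{v_min}^{v_mid} (1/2)·ln((1+ax²)/(1+by²))·f_{H_B}(x)·f_{H_E}(y) dy dx`. -/
theorem asc_case_five
    (D ρ l m c : ℝ) (hD : 0 < D) (hρ0 : 0 ≤ ρ) (hρD : ρ < D) (hl : 0 < l) (hm : 0 < m)
    (hc : 0 < c)
    (vmin vmid vmax : ℝ)
    (hvmin : vmin = c * (D ^ 2 + l ^ 2) ^ (-(m + 3) / 2))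
    (hvmid : vmid = c * (ρ ^ 2 + l ^ 2) ^ (-(m + 3) / 2))
    (hvmax : vmax = c * l ^ (-(m + 3)))
    (a b : ℝ) (ha : 0 < a) (hb : 0 < b)
    {Ω : Type*} [MeasureSpace Ω] [IsProbabilityMeasure (ℙ : Measure Ω)]
    (U W : Ω → EuclideanSpace ℝ (Fin 2)) (hU : Measurable U) (hW : Measurable W)
    (hUlaw : Measure.map U (ℙ : Measure Ω) =
      (volume (Metric.closedBall (0 : EuclideanSpace ℝ (Fin 2)) D))⁻¹ •
        volume.restrict (Metric.closedBall (0 : EuclideanSpace ℝ (Fin 2)) D))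
    (hWlaw : Measure.map W (ℙ : Measure Ω) =
      (volume (Metric.closedBall (0 : EuclideanSpace ℝ (Fin 2)) D \
          Metric.ball (0 : EuclideanSpace ℝ (Fin 2)) ρ))⁻¹ •
        volume.restrict (Metric.closedBall (0 : EuclideanSpace ℝ (Fin 2)) D \
          Metric.ball (0 : EuclideanSpace ℝ (Fin 2)) ρ))
    (hindep : IndepFun U W (ℙ : Measure Ω))
    (HB HE : Ω → ℝ)
    (hHB : ∀ ω, HB ω = c * (‖U ω‖ ^ 2 + l ^ 2) ^ (-(m + 3) / 2))
    (hHE : ∀ ω, HE ω = c * (‖W ω‖ ^ 2 + l ^ 2) ^ (-(m + 3) / 2))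
    (Ξ₁ Ξ₂ : ℝ)
    (hΞ₁ : Ξ₁ = 2 / ((m + 3) * D ^ 2) * c ^ (2 / (m + 3)))
    (hΞ₂ : Ξ₂ = 2 / ((m + 3) * (D ^ 2 - ρ ^ 2)) * c ^ (2 / (m + 3)))
    (χ : ℝ) (hχ : χ = Real.sqrt (a / b))
    (Cs : Ω → ℝ)
    (hCs : ∀ ω, Cs ω =
      if HE ω ≤ χ * HB ω then
        1 / 2 * Real.log ((1 + a * HB ω ^ 2) / (1 + b * HE ω ^ 2))
      else 0)
    (hcase : vmid / vmin ≤ χ) :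
    (∀ᵐ ω ∂(ℙ : Measure Ω), HE ω ≤ χ * HB ω) ∧
      (∫ ω, Cs ω ∂(ℙ : Measure Ω) =
        ∫ ω, 1 / 2 * Real.log ((1 + a * HB ω ^ 2) / (1 + b * HE ω ^ 2))
          ∂(ℙ : Measure Ω)) ∧
      (∫ ω, Cs ω ∂(ℙ : Measure Ω) =
        ∫ x in vmin..vmax, ∫ y in vmin..vmid,
          1 / 2 * Real.log ((1 + a * x ^ 2) / (1 + b * y ^ 2)) *
            (Ξ₁ * x ^ (-2 / (m + 3) - 1)) * (Ξ₂ * y ^ (-2 / (m + 3) - 1))) :=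
  asc_case_five_general D ρ l m c hD hρ0 hρD hl hm hc vmin vmid vmax hvmin hvmid hvmax a b ha hb U W
    hU hW hUlaw hWlaw HB HE hHB hHE Ξ₁ Ξ₂ hΞ₁ hΞ₂ χ Cs hCs hcase
end
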